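/- Let M be an MDP with a Dirac-transition modification M' obtained by splitting every transition into two: formally, let P : S → A → S → ℚ≥0 be a transition function and define M' on state space S × {even, odd} by P'((s,even),a)((s',odd)) = P(s,a)(s') and P'((s,odd),a)((s,even)) = 1. Then for every n ∈ ℕ, state s, and policy σ in M, the probability under σ of paths of length n from s ending in t in M equals the probability under the corresponding policy σ' in M' of paths of length 2n from (s,even) ending in (t,even). -/
import Mathlib


/-- Probability of the set of paths of length `n` from `s` ending in `t`,
under transition function `P` and (history-dependent) policy `σ`. -/
def probEndAt {S A : Type*} [Fintype S] [Fintype A] [DecidableEq S]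
    (P : S → A → S → ℚ) (σ : List S → A → ℚ) (t : S) :
    ℕ → List S → S → ℚ
  | 0, _, s => if s = t then 1 else 0
  | n + 1, hist, s =>
      ∑ a, ∑ s', σ (hist ++ [s]) a * P s a s' * probEndAt P σ t n (hist ++ [s]) s'

/-- The split MDP: every transition is subdivided in two, using `false` for
"even" states and `true` for "odd" (middle) states. -/
def splitP {S A : Type*} [DecidableEq S] (P : S → A → S → ℚ) :
    (S × Bool) → A → (S × Bool) → ℚ :=
  fun p a q =>
    match p, q with
    | (s, false), (s', true) => P s a s'
    | (s, true), (s', false) => if s' = s then 1 else 0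
    | _, _ => 0

/-- Projection of a history in the split MDP back to the original MDP:
keep the even states. -/
def evenProj {S : Type*} (h : List (S × Bool)) : List S :=
  (h.filter (fun p => !p.2)).map Prod.fst

lemma evenProj_append_false {S : Type*} (h : List (S × Bool)) (s : S) :
    evenProj (h ++ [(s, false)]) = evenProj h ++ [s] := by
  simp [evenProj]

lemma evenProj_append_true {S : Type*} (h : List (S × Bool)) (s : S) :
    evenProj (h ++ [(s, true)]) = evenProj h := by
  simp [evenProj]

/-- Splitting every transition of an MDP in two doubles the horizon: the maximal
path structure is preserved.  For every policy `σ` in `M` and every policy `σ'`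
of `M'` that mimics `σ` on even states, the probability of paths of length `n`
from `s` ending in `t` in `M` equals the probability of paths of length `2n`
from `(s,even)` ending in `(t,even)` in `M'`. -/
theorem split_mdp_synchronized_prob {S A : Type*} [Fintype S] [Fintype A]
    [DecidableEq S]
    (P : S → A → S → ℚ) (hP : ∀ s a s', 0 ≤ P s a s')
    (σ : List S → A → ℚ) (σ' : List (S × Bool) → A → ℚ)
    (hσ : ∀ h, ∑ a, σ h a = 1) (hσ' : ∀ h, ∑ a, σ' h a = 1)
    (hmimic : ∀ (h : List (S × Bool)) (s : S) (a : A),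
      σ' (h ++ [(s, false)]) a = σ (evenProj (h ++ [(s, false)])) a)
    (t s : S) (n : ℕ) :
    probEndAt P σ t n [] s =
      probEndAt (splitP P) σ' (t, false) (2 * n) [] (s, false) := by
  suffices key : ∀ n (h : List (S × Bool)) (s : S),
      probEndAt P σ t n (evenProj h) s =
        probEndAt (splitP P) σ' (t, false) (2 * n) h (s, false) by
    simpa [evenProj] using key n [] s
  intro n
  induction n with
  | zero => intro h s; simp [probEndAt, Prod.ext_iff]
  | succ n ih =>
    intro h s
    have h2 : 2 * (n + 1) = (2 * n + 1) + 1 := by ring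
    rw [h2]
    show _ = ∑ a, ∑ q, σ' (h ++ [(s, false)]) a * splitP P (s, false) a q *
        probEndAt (splitP P) σ' (t, false) (2 * n + 1) (h ++ [(s, false)]) q
    have step2 : ∀ s' : S,
        probEndAt (splitP P) σ' (t, false) (2 * n + 1) (h ++ [(s, false)]) (s', true)
          = probEndAt (splitP P) σ' (t, false) (2 * n)
              (h ++ [(s, false)] ++ [(s', true)]) (s', false) := by
      intro s'
      show (∑ b, ∑ q, σ' (h ++ [(s, false)] ++ [(s', true)]) b *
          splitP P (s', true) b q * _) = _
      have : ∀ b : A, ∑ q : S × Bool, σ' (h ++ [(s, false)] ++ [(s', true)]) b *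
          splitP P (s', true) b q *
          probEndAt (splitP P) σ' (t, false) (2 * n)
            (h ++ [(s, false)] ++ [(s', true)]) q
          = σ' (h ++ [(s, false)] ++ [(s', true)]) b *
            probEndAt (splitP P) σ' (t, false) (2 * n)
              (h ++ [(s, false)] ++ [(s', true)]) (s', false) := by
        intro b
        rw [Fintype.sum_prod_type]
        rw [Finset.sum_eq_single s']
        · simp [splitP]
        · intro x _ hx
          simp [splitP, hx, Ne.symm hx]
        · simp
      rw [Finset.sum_congr rfl fun b _ => this b, ← Finset.sum_mul, hσ', one_mul]
    calc probEndAt P σ t (n + 1) (evenProj h) s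
        = ∑ a, ∑ s', σ (evenProj h ++ [s]) a * P s a s' *
            probEndAt P σ t n (evenProj h ++ [s]) s' := rfl
      _ = ∑ a, ∑ q : S × Bool, σ' (h ++ [(s, false)]) a * splitP P (s, false) a q *
            probEndAt (splitP P) σ' (t, false) (2 * n + 1) (h ++ [(s, false)]) q := by
          refine Finset.sum_congr rfl fun a _ => ?_
          rw [Fintype.sum_prod_type]
          refine Finset.sum_congr rfl fun s' _ => ?_
          have hb : ∀ b : Bool, splitP P (s, false) a (s', b) = if b then P s a s' else 0 := by
            intro b; cases b <;> simp [splitP]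
          simp only [Fintype.sum_bool, hb]
          simp only [if_pos, if_neg, mul_zero, zero_mul, add_zero]
          rw [step2 s', hmimic h s a, evenProj_append_false]
          have : evenProj (h ++ [(s, false)] ++ [(s', true)]) = evenProj h ++ [s] := by
            rw [evenProj_append_true, evenProj_append_false]
          rw [← ih (h ++ [(s, false)] ++ [(s', true)]) s', this]
          simp
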